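/- Let p be an odd prime, n a positive integer, q = pⁿ, and K a finite field with q² = p^{2n} elements with F its subfield of order q. Let k be an integer with 1 ≤ k ≤ n such that 2n/gcd(2n,k) is odd, and set f(x) = x^{p^k+1}. Then for every c ∈ K the number of x ∈ K with f(x) = c equals the number of y ∈ K with y² = c, and for every θ ∈ K \ {0} with θ^{q+1} a nonsquare in F and all a, b ∈ K, the number of x ∈ K with (x+a)^{p^k+1} − b ∈ θF equals 1 if b ∈ θF and equals q+1 if b ∉ θF; hence U_θ = {(x, tθ) : x ∈ K, t ∈ F} ∪ {(∞)} is a unital in the Albert commutative twisted field plane Π(f). -/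

import Mathlib

/-- The point set of the shift plane `Π(f)`: affine points `(x,y)`, points at
infinity `(a)` for `a ∈ K`, and the point `(∞)`. -/
abbrev ShiftPt (K : Type) : Type := (K × K) ⊕ (K ⊕ Unit)

/-- The affine line `L_{a,b} = {(x, f(x+a) − b) : x ∈ K} ∪ {(a)}` of the shift plane. -/
def affLine (K : Type) [Field K] (f : K → K) (a b : K) : Set (ShiftPt K) :=
  {P | (∃ x : K, P = Sum.inl (x, f (x + a) - b)) ∨ P = Sum.inr (Sum.inl a)}

/-- The vertical line `N_a = {(a,y) : y ∈ K} ∪ {(∞)}` of the shift plane. -/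
def vertLine (K : Type) [Field K] (a : K) : Set (ShiftPt K) :=
  {P | (∃ y : K, P = Sum.inl (a, y)) ∨ P = Sum.inr (Sum.inr ())}

/-- The line at infinity of the shift plane. -/
def lineAtInf (K : Type) : Set (ShiftPt K) :=
  {P | ∃ s : K ⊕ Unit, P = Sum.inr s}

/-- The set of all lines of the shift plane `Π(f)`. -/
def shiftLines (K : Type) [Field K] (f : K → K) : Set (Set (ShiftPt K)) :=
  {L | (∃ a b : K, L = affLine K f a b) ∨ (∃ a : K, L = vertLine K a) ∨ L = lineAtInf K}

/-- The set `θF = {tθ : t ∈ F}`, where `F = {t : t^q = t}` is the subfield of order `q`. -/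
def scalarSet (K : Type) [Field K] (q : ℕ) (θ : K) : Set K :=
  {c | ∃ t : K, t ^ q = t ∧ c = t * θ}

/-- The point set `U_θ = {(x, tθ) : x ∈ K, t ∈ F} ∪ {(∞)}`. -/
def unitalSet (K : Type) [Field K] (q : ℕ) (θ : K) : Set (ShiftPt K) :=
  {P | (∃ x t : K, t ^ q = t ∧ P = Sum.inl (x, t * θ)) ∨ P = Sum.inr (Sum.inr ())}

/-!
Write `p ^ k + 1 = 2 * r`. As `2n / gcd(2n, k)` is odd, `gcd(2n, 2k) = gcd(2n, k)` divides
`k`, so any common divisor of `p ^ k + 1` and `p ^ (2n) - 1` divides `p ^ k - 1`, hence `2`;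
with `k` even, `r` is odd and coprime to `|K| - 1`. Thus `x ↦ x ^ r` permutes `K` and
`x ↦ x ^ (p^k+1)` has the fibres of `y ↦ y ^ 2`, so everything reduces to counting `y` with
`y ^ 2 ∈ b + θF`. Every element of `F` is a square in `K` while `θ` is not: if `b ∈ θF` only
`y = 0` qualifies, and otherwise the count is `∑_{t ∈ F} (1 + χ(b + tθ)) = q + 1` for the
quadratic character `χ` of `K`.
-/

open Finset

theorem Nat.gcd_two_mul_eq_of_odd_div_gcd {n k : ℕ} (h : Odd (2 * n / Nat.gcd (2 * n) k)) :
    Nat.gcd (2 * n) (2 * k) = Nat.gcd (2 * n) k := by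
  obtain ⟨m, k', hmk', hm, hk'⟩ := Nat.exists_coprime (2 * n) k
  set d := Nat.gcd (2 * n) k
  have hd : 0 < d := Nat.pos_of_ne_zero fun h0 => by simp [h0] at h
  rw [hm, Nat.mul_div_cancel _ hd] at h
  have hm2 : Nat.Coprime m (2 * k') := Nat.Coprime.mul_right (Nat.coprime_two_right.mpr h) hmk'
  rw [hm, hk', show 2 * (k' * d) = d * (2 * k') by ring, mul_comm m, Nat.gcd_mul_left, hm2,
    mul_one]

theorem Nat.two_dvd_gcd_of_odd_div_gcd {n k : ℕ} (h : Odd (2 * n / Nat.gcd (2 * n) k)) :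
    2 ∣ Nat.gcd (2 * n) k := by
  have h2 : 2 ∣ 2 * n / Nat.gcd (2 * n) k * Nat.gcd (2 * n) k := by
    rw [Nat.div_mul_cancel (Nat.gcd_dvd_left _ _)]
    exact dvd_mul_right 2 n
  exact (Nat.coprime_two_left.mpr h).dvd_of_dvd_mul_left h2

theorem Nat.gcd_pow_add_one_pow_sub_one_dvd_two {p n k : ℕ} (hp : 0 < p)
    (h : Odd (2 * n / Nat.gcd (2 * n) k)) :
    Nat.gcd (p ^ k + 1) (p ^ (2 * n) - 1) ∣ 2 := by
  have hsq : p ^ k + 1 ∣ p ^ (2 * k) - 1 :=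
    ⟨p ^ k - 1, by rw [mul_comm 2 k, pow_mul, ← Nat.sq_sub_sq, one_pow]⟩
  have hdvd : Nat.gcd (p ^ k + 1) (p ^ (2 * n) - 1) ∣ p ^ k - 1 :=
    calc _ ∣ Nat.gcd (p ^ (2 * n) - 1) (p ^ (2 * k) - 1) :=
          Nat.gcd_comm (p ^ k + 1) _ ▸ Nat.gcd_dvd_gcd_of_dvd_right _ hsq
      _ = p ^ Nat.gcd (2 * n) k - 1 := by
          rw [Nat.pow_sub_one_gcd_pow_sub_one, Nat.gcd_two_mul_eq_of_odd_div_gcd h]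
      _ ∣ p ^ k - 1 := Nat.pow_sub_one_dvd_pow_sub_one p (Nat.gcd_dvd_right _ _)
  have h2 : p ^ k + 1 - (p ^ k - 1) = 2 := by have := Nat.one_le_pow k p hp; omega
  simpa only [h2] using Nat.dvd_sub (Nat.gcd_dvd_left _ _) hdvd

/-- Since `k` is even, `p ^ k` is an odd square, so `p ^ k + 1 ≡ 2 [MOD 4]`. -/
theorem exists_odd_coprime_of_pow_add_one {p n k : ℕ} (hp : Odd p)
    (h : Odd (2 * n / Nat.gcd (2 * n) k)) :
    ∃ r, Odd r ∧ p ^ k + 1 = 2 * r ∧ Nat.Coprime r (p ^ (2 * n) - 1) := by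
  obtain ⟨j, hj⟩ : Odd (p ^ (k / 2)) := hp.pow
  have hk : 2 * (k / 2) = k :=
    Nat.mul_div_cancel' ((Nat.two_dvd_gcd_of_odd_div_gcd h).trans (Nat.gcd_dvd_right _ _))
  have hpk : p ^ k + 1 = 2 * (2 * (j * j + j) + 1) := by rw [← hk, pow_mul', hj]; ring
  refine ⟨2 * (j * j + j) + 1, odd_two_mul_add_one _, hpk, ?_⟩
  have hg : Nat.gcd (2 * (j * j + j) + 1) (p ^ (2 * n) - 1) ∣ 2 :=
    (Nat.gcd_dvd_gcd_of_dvd_left _ (hpk ▸ dvd_mul_left _ 2)).trans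
      (Nat.gcd_pow_add_one_pow_sub_one_dvd_two hp.pos h)
  rcases (Nat.dvd_prime Nat.prime_two).mp hg with h1 | h2
  · exact h1
  · have := h2 ▸ Nat.gcd_dvd_left (2 * (j * j + j) + 1) (p ^ (2 * n) - 1)
    omega

theorem FiniteField.pow_injective_of_coprime {K : Type*} [Field K] [Fintype K] {r : ℕ}
    (hr0 : r ≠ 0) (hr : r.Coprime (Fintype.card K - 1)) :
    Function.Injective fun x : K => x ^ r := by
  intro u v huv
  simp only at huv
  rcases eq_or_ne v 0 with rfl | hv
  · simpa [zero_pow hr0, pow_eq_zero_iff hr0] using huv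
  have hu : u ≠ 0 := by
    rintro rfl
    exact hv ((pow_eq_zero_iff hr0).mp (huv.symm.trans (zero_pow hr0)))
  have h1 : (u / v) ^ r = 1 := by rw [div_pow, huv, div_self (pow_ne_zero _ hv)]
  have h2 : (u / v) ^ (Fintype.card K - 1) = 1 :=
    FiniteField.pow_card_sub_one_eq_one _ (div_ne_zero hu hv)
  exact (div_eq_one_iff_eq hv).mp ((pow_eq_one_iff_of_coprime hr).mp ⟨h1, h2⟩)

theorem ncard_setOf_add_pow_two_mul_mem {K : Type*} [Field K] {r : ℕ}
    (hr : Function.Bijective fun x : K => x ^ r) (a : K) (S : Set K) :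
    {x : K | (x + a) ^ (2 * r) ∈ S}.ncard = {y : K | y ^ 2 ∈ S}.ncard := by
  have hσ : Function.Bijective fun x : K => (x + a) ^ r := hr.comp (Equiv.addRight a).bijective
  simp_rw [pow_mul']
  exact Set.ncard_preimage_of_injective_subset_range (s := {y | y ^ 2 ∈ S}) hσ.1
    (fun y _ => hσ.2 y)

theorem FiniteField.ncard_setOf_pow_eq_self {K : Type*} [Field K] [Fintype K] {q : ℕ}
    (hcard : Fintype.card K = q ^ 2) : {t : K | t ^ q = t}.ncard = q := by
  classical
  have hq : 1 < q := by
    by_contra! h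
    have := Fintype.one_lt_card (α := K)
    rw [hcard] at this
    nlinarith
  obtain ⟨g, hg⟩ := IsCyclic.exists_ofOrder_eq_natCard (α := Kˣ)
  rw [Nat.card_units, Nat.card_eq_fintype_card, hcard] at hg
  have hζ : IsPrimitiveRoot ((g : K) ^ (q + 1)) (q - 1) :=
    (IsPrimitiveRoot.coe_units_iff.mpr (hg ▸ IsPrimitiveRoot.orderOf g)).pow
      (Nat.sub_pos_of_lt (Nat.one_lt_pow two_ne_zero hq)) (by rw [← Nat.sq_sub_sq, one_pow])
  have hroots (x : K) := Polynomial.mem_nthRootsFinset (x := x) (Nat.sub_pos_of_lt hq) (1 : K)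
  have hset : {t : K | t ^ q = t} = ↑(insert 0 (Polynomial.nthRootsFinset (q - 1) (1 : K))) := by
    ext x
    simp only [Set.mem_ofPred_eq, coe_insert, Set.mem_insert_iff, mem_coe, hroots]
    rcases eq_or_ne x 0 with rfl | hx
    · simp only [true_or, iff_true]
      exact zero_pow (by omega)
    · rw [← pow_sub_one_mul (by omega : q ≠ 0), mul_eq_right₀ hx]
      simp [hx]
  rw [hset, Set.ncard_coe_finset, card_insert_of_notMem (by
      rw [hroots, zero_pow (by omega)]
      exact zero_ne_one), hζ.card_nthRootsFinset]
  omega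

theorem not_isSquare_of_not_exists_sq_eq_pow_succ {K : Type*} [Field K] [Fintype K] {q : ℕ}
    (hcard : Fintype.card K = q ^ 2) {θ : K}
    (hθ : ¬ ∃ s : K, s ^ q = s ∧ s ^ 2 = θ ^ (q + 1)) :
    ¬ IsSquare θ := by
  rintro ⟨y, rfl⟩
  refine hθ ⟨y ^ (q + 1), ?_, by ring⟩
  rw [← pow_mul, show (q + 1) * q = q ^ 2 + q by ring, pow_add, ← hcard, FiniteField.pow_card,
    pow_succ']

namespace Subfield

variable {K : Type*} [Field K] [Fintype K] (F : Subfield K) [Fintype F]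

theorem isSquare_of_card_eq_sq (hK : ringChar K ≠ 2)
    (hcard : Fintype.card K = Fintype.card F ^ 2) (t : F) : IsSquare (t : K) := by
  rcases eq_or_ne t 0 with rfl | ht
  · exact ⟨0, by simp⟩
  obtain ⟨j, hj⟩ : Odd (Fintype.card F) := by
    have := FiniteField.odd_card_of_char_ne_two hK
    rw [hcard] at this
    exact (Nat.odd_pow_iff two_ne_zero).mp (Nat.odd_iff.mpr this)
  have hexp : Fintype.card K / 2 = (Fintype.card F - 1) * (j + 1) := by
    rw [hcard, hj, Nat.add_sub_cancel, show (2 * j + 1) ^ 2 = 2 * (2 * j * (j + 1)) + 1 by ring]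
    omega
  refine (FiniteField.isSquare_iff hK (by exact_mod_cast ht)).mpr ?_
  rw [hexp, pow_mul, ← SubmonoidClass.coe_pow, FiniteField.pow_card_sub_one_eq_one t ht]
  simp

theorem bijective_mul_add_mul (hcard : Fintype.card K = Fintype.card F ^ 2) {b θ : K}
    (hθ : θ ≠ 0) (hb : ∀ t ∈ F, b ≠ t * θ) :
    Function.Bijective fun fg : F × F => (fg.1 : K) * b + fg.2 * θ := by
  refine (Fintype.bijective_iff_injective_and_card _).mpr
    ⟨?_, by rw [Fintype.card_prod, hcard, sq]⟩
  rintro ⟨f, g⟩ ⟨f', g'⟩ h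
  simp only at h
  obtain rfl : f = f' := by
    by_contra hne
    have hne' : (f : K) - f' ≠ 0 := sub_ne_zero.mpr (by exact_mod_cast hne)
    refine hb ((g' - g) / (f - f')) (F.div_mem (F.sub_mem g'.2 g.2) (F.sub_mem f.2 f'.2)) ?_
    field_simp
    linear_combination h
  obtain rfl : g = g' := Subtype.ext (mul_right_cancel₀ hθ (add_left_cancel h))
  rfl

/-- Writing `K = F b ⊕ F θ`, the quadratic character sums to `0` over `K`; the line `f = 0`
contributes `-(|F| - 1)` since `θ` is a nonsquare and every `f ∈ F` is a square, while each of
the other `|F| - 1` lines `f b + F θ` contributes the same sum as `b + F θ`. -/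
theorem sum_quadraticChar_add_mul [DecidableEq K] (hK : ringChar K ≠ 2)
    (hcard : Fintype.card K = Fintype.card F ^ 2) {b θ : K} (hθ : ¬ IsSquare θ)
    (hb : ∀ t ∈ F, b ≠ t * θ) : ∑ t : F, quadraticChar K (b + t * θ) = 1 := by
  set χ := quadraticChar K
  set S := ∑ t : F, χ (b + t * θ)
  have hθ0 : θ ≠ 0 := by rintro rfl; exact hθ IsSquare.zero
  have hχF : ∀ f : F, f ≠ 0 → χ f = 1 := fun f hf =>
    (quadraticChar_one_iff_isSquare (by exact_mod_cast hf)).mpr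
      (F.isSquare_of_card_eq_sq hK hcard f)
  have hrow : ∀ f : F, f ≠ 0 → ∑ g : F, χ (f * b + g * θ) = S := by
    intro f hf
    have hf' : (f : K) ≠ 0 := by exact_mod_cast hf
    calc ∑ g : F, χ (f * b + g * θ) = ∑ g : F, χ (b + ↑(g / f) * θ) := by
          refine sum_congr rfl fun g _ => ?_
          rw [show (f : K) * b + g * θ = f * (b + ↑(g / f) * θ) by push_cast; field_simp,
            map_mul, hχF f hf, one_mul]
      _ = S := Fintype.sum_equiv (Equiv.divRight₀ f hf) _ _ fun _ => rfl
  have hrow₀ : ∑ g : F, χ (↑(0 : F) * b + g * θ) = ∑ g ∈ ({0} : Finset F)ᶜ, -1 := by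
    rw [Fintype.sum_eq_add_sum_compl 0]
    simp only [ZeroMemClass.coe_zero, zero_mul, zero_add, MulChar.map_zero]
    refine sum_congr rfl fun g hg => ?_
    rw [map_mul, hχF g (by simpa using hg), quadraticChar_neg_one_iff_not_isSquare.mpr hθ,
      one_mul]
  have htotal : ∑ fg : F × F, χ (fg.1 * b + fg.2 * θ) = 0 := by
    rw [Fintype.sum_bijective _ (F.bijective_mul_add_mul hcard hθ0 hb) _ χ fun _ => rfl]
    exact quadraticChar_sum_zero hK
  rw [Fintype.sum_prod_type, Fintype.sum_eq_add_sum_compl 0, hrow₀,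
    sum_congr rfl fun f hf => hrow f (by simpa using hf), ← sum_add_distrib, sum_const,
    smul_eq_zero] at htotal
  rcases htotal with h | h
  · exact absurd h (card_ne_zero_of_mem (a := (1 : F)) (by simp))
  · linarith

theorem ncard_setOf_sq_sub_eq_mul_of_forall_ne (hK : ringChar K ≠ 2)
    (hcard : Fintype.card K = Fintype.card F ^ 2) {b θ : K} (hθ : ¬ IsSquare θ)
    (hb : ∀ t ∈ F, b ≠ t * θ) :
    {y : K | ∃ t ∈ F, y ^ 2 - b = t * θ}.ncard = Fintype.card F + 1 := by
  classical
  have hθ0 : θ ≠ 0 := by rintro rfl; exact hθ IsSquare.zero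
  have hset : {y : K | ∃ t ∈ F, y ^ 2 - b = t * θ} =
      ↑(univ.biUnion fun t : F => {y : K | y ^ 2 = b + t * θ}.toFinset) := by
    ext y
    simp [sub_eq_iff_eq_add']
  have hdisj : ((univ : Finset F) : Set F).PairwiseDisjoint
      fun t : F => {y : K | y ^ 2 = b + t * θ}.toFinset := by
    intro t₁ _ t₂ _ hne
    refine disjoint_left.mpr fun y h₁ h₂ => hne (Subtype.ext ?_)
    simp only [Set.mem_toFinset, Set.mem_ofPred_eq] at h₁ h₂
    exact mul_right_cancel₀ hθ0 (add_left_cancel (h₁.symm.trans h₂))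
  rw [hset, Set.ncard_coe_finset, card_biUnion hdisj]
  apply Nat.cast_injective (R := ℤ)
  push_cast
  simp_rw [quadraticChar_card_sqrts hK, sum_add_distrib,
    F.sum_quadraticChar_add_mul hK hcard hθ hb]
  simp [add_comm]

theorem setOf_sq_sub_eq_mul_eq_singleton_zero (hK : ringChar K ≠ 2)
    (hcard : Fintype.card K = Fintype.card F ^ 2) {b θ t₀ : K} (hθ : ¬ IsSquare θ)
    (ht₀ : t₀ ∈ F) (hb : b = t₀ * θ) :
    {y : K | ∃ t ∈ F, y ^ 2 - b = t * θ} = {0} := by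
  ext y
  simp only [Set.mem_ofPred_eq, Set.mem_singleton_iff]
  refine ⟨fun ⟨t, ht, hy⟩ => ?_, fun hy =>
    ⟨-t₀, F.neg_mem ht₀, by rw [hy, hb]; ring⟩⟩
  by_contra hy0
  have hs : y ^ 2 = (t + t₀) * θ := by linear_combination hy + hb
  have hs0 : t + t₀ ≠ 0 := fun h =>
    hy0 ((pow_eq_zero_iff two_ne_zero).mp (by rw [hs, h, zero_mul]))
  obtain ⟨c, hc⟩ := F.isSquare_of_card_eq_sq hK hcard ⟨t + t₀, F.add_mem ht ht₀⟩
  have hc0 : c ≠ 0 := by rintro rfl; exact hs0 (by simpa using hc)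
  refine hθ ⟨y / c, ?_⟩
  have hc' : t + t₀ = c * c := hc
  field_simp
  linear_combination -hs - θ * hc'

end Subfield

def powFixedSubfield (K : Type*) [Field K] (p n : ℕ) [ExpChar K p] : Subfield K :=
  (iterateFrobenius K p n).eqLocusField (RingHom.id K)

theorem ncard_setOf_sq_sub_mem_scalarSet {K : Type} [Field K] [Fintype K] {p n : ℕ}
    [ExpChar K p] (hK : ringChar K ≠ 2) (hcard : Fintype.card K = (p ^ n) ^ 2) {θ : K}
    (hθ : ¬ IsSquare θ) (b : K) :
    (b ∈ scalarSet K (p ^ n) θ → {y : K | y ^ 2 - b ∈ scalarSet K (p ^ n) θ}.ncard = 1) ∧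
    (b ∉ scalarSet K (p ^ n) θ →
      {y : K | y ^ 2 - b ∈ scalarSet K (p ^ n) θ}.ncard = p ^ n + 1) := by
  classical
  let F := powFixedSubfield K p n
  have hF : Fintype.card F = p ^ n := by
    rw [← Nat.card_eq_fintype_card, ← SetLike.coe_sort_coe, Nat.card_coe_set_eq]
    exact FiniteField.ncard_setOf_pow_eq_self hcard
  have hKF : Fintype.card K = Fintype.card F ^ 2 := hF ▸ hcard
  have hset : {y : K | y ^ 2 - b ∈ scalarSet K (p ^ n) θ} =
      {y | ∃ t ∈ F, y ^ 2 - b = t * θ} := rfl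
  refine ⟨fun ⟨t₀, ht₀, hb⟩ => ?_, fun hb => ?_⟩
  · rw [hset, F.setOf_sq_sub_eq_mul_eq_singleton_zero hK hKF hθ ht₀ hb, Set.ncard_singleton]
  · rw [hset, F.ncard_setOf_sq_sub_eq_mul_of_forall_ne hK hKF hθ fun t ht h => hb ⟨t, ht, h⟩,
      hF]

section ShiftPlane

variable {K : Type} [Field K] {q : ℕ} {θ : K}

theorem affLine_inter_unitalSet (f : K → K) (a b : K) :
    affLine K f a b ∩ unitalSet K q θ =
      (fun x => Sum.inl (x, f (x + a) - b)) '' {x | f (x + a) - b ∈ scalarSet K q θ} := by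
  ext (⟨x, y⟩ | a' | u) <;> simp [affLine, unitalSet, scalarSet]
  constructor
  · rintro ⟨rfl, h⟩
    exact ⟨h, rfl⟩
  · rintro ⟨h, rfl⟩
    exact ⟨rfl, h⟩

theorem vertLine_inter_unitalSet (a : K) :
    vertLine K a ∩ unitalSet K q θ =
      insert (Sum.inr (Sum.inr ())) ((fun t => Sum.inl (a, t * θ)) '' {t : K | t ^ q = t}) := by
  ext (⟨x, y⟩ | a' | u) <;> simp [vertLine, unitalSet]
  constructor
  · rintro ⟨rfl, t, ht, rfl⟩
    exact ⟨t, ht, rfl, rfl⟩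
  · rintro ⟨t, ht, rfl, rfl⟩
    exact ⟨rfl, t, ht, rfl⟩

theorem lineAtInf_inter_unitalSet :
    lineAtInf K ∩ unitalSet K q θ = {Sum.inr (Sum.inr ())} := by
  ext (⟨x, y⟩ | a' | u) <;> simp [lineAtInf, unitalSet]

theorem ncard_inter_unitalSet_of_mem_shiftLines [Finite K] (f : K → K) (hθ : θ ≠ 0)
    (hF : {t : K | t ^ q = t}.ncard = q)
    (hf : ∀ a b : K, {x | f (x + a) - b ∈ scalarSet K q θ}.ncard = 1 ∨
      {x | f (x + a) - b ∈ scalarSet K q θ}.ncard = q + 1)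
    {L : Set (ShiftPt K)} (hL : L ∈ shiftLines K f) :
    (L ∩ unitalSet K q θ).ncard = 1 ∨ (L ∩ unitalSet K q θ).ncard = q + 1 := by
  rcases hL with ⟨a, b, rfl⟩ | ⟨a, rfl⟩ | rfl
  · rw [affLine_inter_unitalSet, Set.ncard_image_of_injective _
      fun x y h => (Prod.ext_iff.mp (Sum.inl_injective h)).1]
    exact hf a b
  · rw [vertLine_inter_unitalSet, Set.ncard_insert_of_notMem (by simp),
      Set.ncard_image_of_injective _
        fun s t h => mul_right_cancel₀ hθ (Prod.ext_iff.mp (Sum.inl_injective h)).2, hF]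
    exact Or.inr rfl
  · rw [lineAtInf_inter_unitalSet, Set.ncard_singleton]
    exact Or.inl rfl

end ShiftPlane

theorem stmt4_general (p n q : ℕ) (hp : Nat.Prime p) (hpodd : Odd p) (hq : q = p ^ n)
    (K : Type) [Field K] [Fintype K] (hcard : Fintype.card K = q ^ 2)
    (k : ℕ) (hkodd : Odd (2 * n / Nat.gcd (2 * n) k)) :
    (∀ c : K,
      {x : K | x ^ (p ^ k + 1) = c}.ncard = {y : K | y ^ 2 = c}.ncard) ∧
    (∀ θ : K, θ ≠ 0 → (¬ ∃ s : K, s ^ q = s ∧ s ^ 2 = θ ^ (q + 1)) →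
      (∀ a b : K,
        (b ∈ scalarSet K q θ →
          {x : K | (x + a) ^ (p ^ k + 1) - b ∈ scalarSet K q θ}.ncard = 1) ∧
        (b ∉ scalarSet K q θ →
          {x : K | (x + a) ^ (p ^ k + 1) - b ∈ scalarSet K q θ}.ncard = q + 1)) ∧
      (∀ L ∈ shiftLines K (fun x : K => x ^ (p ^ k + 1)),
        (L ∩ unitalSet K q θ).ncard = 1 ∨ (L ∩ unitalSet K q θ).ncard = q + 1)) := by
  subst hq
  have : Fact p.Prime := ⟨hp⟩
  have : CharP K p := charP_of_card_eq_prime_pow (hcard.trans (pow_mul p n 2).symm)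
  have hK : ringChar K ≠ 2 := by
    rw [ringChar.eq K p]
    rintro rfl
    exact absurd hpodd (by decide)
  obtain ⟨r, hr_odd, hr, hr_cop⟩ := exists_odd_coprime_of_pow_add_one hpodd hkodd
  have hσ : Function.Bijective fun x : K => x ^ r := Finite.injective_iff_bijective.mp
    (FiniteField.pow_injective_of_coprime hr_odd.pos.ne' (by rwa [hcard, ← pow_mul, mul_comm]))
  have hfiber (a : K) (S : Set K) :
      {x : K | (x + a) ^ (p ^ k + 1) ∈ S}.ncard = {y : K | y ^ 2 ∈ S}.ncard :=
    hr ▸ ncard_setOf_add_pow_two_mul_mem hσ a S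
  refine ⟨fun c => by simpa using hfiber 0 {c}, fun θ hθ hns => ?_⟩
  have hθsq := not_isSquare_of_not_exists_sq_eq_pow_succ hcard hns
  have hcount (a b : K) := hfiber a ((· - b) ⁻¹' scalarSet K (p ^ n) θ) ▸
    ncard_setOf_sq_sub_mem_scalarSet hK hcard hθsq b
  refine ⟨hcount, fun L hL => ncard_inter_unitalSet_of_mem_shiftLines _ hθ
    (FiniteField.ncard_setOf_pow_eq_self hcard) (fun a b => ?_) hL⟩
  by_cases hb : b ∈ scalarSet K (p ^ n) θ
  · exact Or.inl ((hcount a b).1 hb)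
  · exact Or.inr ((hcount a b).2 hb)

/-- Theorem 2.4 (b).  For `f(x) = x^{p^k+1}` on `K = F_{q²}` with
`q = pⁿ`, `1 ≤ k ≤ n` and `2n/gcd(2n,k)` odd (an Albert commutative twisted field
plane), every `c` satisfies `#{x : f(x) = c} = #{y : y² = c}`, and for every
`θ ≠ 0` with `θ^{q+1}` a nonsquare in the subfield `F` of order `q` and all `a b`,
the number of `x` with `(x+a)^{p^k+1} − b ∈ θF` is `1` if `b ∈ θF` and `q+1`
otherwise; hence `U_θ` is a unital in `Π(f)`. -/
theorem stmt4 (p n q : ℕ) (hp : Nat.Prime p) (hpodd : Odd p) (hn : 0 < n) (hq : q = p ^ n)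
    (K : Type) [Field K] [Fintype K] (hcard : Fintype.card K = q ^ 2)
    (k : ℕ) (hk1 : 1 ≤ k) (hkn : k ≤ n) (hkodd : Odd (2 * n / Nat.gcd (2 * n) k)) :
    (∀ c : K,
      {x : K | x ^ (p ^ k + 1) = c}.ncard = {y : K | y ^ 2 = c}.ncard) ∧
    (∀ θ : K, θ ≠ 0 → (¬ ∃ s : K, s ^ q = s ∧ s ^ 2 = θ ^ (q + 1)) →
      (∀ a b : K,
        (b ∈ scalarSet K q θ →
          {x : K | (x + a) ^ (p ^ k + 1) - b ∈ scalarSet K q θ}.ncard = 1) ∧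
        (b ∉ scalarSet K q θ →
          {x : K | (x + a) ^ (p ^ k + 1) - b ∈ scalarSet K q θ}.ncard = q + 1)) ∧
      (∀ L ∈ shiftLines K (fun x : K => x ^ (p ^ k + 1)),
        (L ∩ unitalSet K q θ).ncard = 1 ∨ (L ∩ unitalSet K q θ).ncard = q + 1)) :=
  stmt4_general p n q hp hpodd hq K hcard k hkodd
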